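/- The Lévy-Prokhorov lifting is locally nonexpansive: for nonexpansive maps f₁, f₂ : ⟨X,d_X⟩ → ⟨Y,d_Y⟩, sup_{φ ∈ DX} δ_LP^{d_Y}(Df₁(φ), Df₂(φ)) ≤ sup_{x ∈ X} d_Y(f₁(x), f₂(x)). -/

import Mathlib

open scoped ENNReal Classical

noncomputable section

def mass {S : Type*} (φ : S → ℝ≥0∞) (X : Set S) : ℝ≥0∞ := ∑' x : X, φ x

def IsSubdist {S : Type*} (φ : S → ℝ≥0∞) : Prop := mass φ Set.univ ≤ 1

def IsPseudometric {S : Type*} (d : S → S → ℝ≥0∞) : Prop :=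
  (∀ x, d x x = 0) ∧ (∀ x y, d x y = d y x) ∧ (∀ x y z, d x z ≤ d x y + d y z)

def Bounded1 {S : Type*} (d : S → S → ℝ≥0∞) : Prop := ∀ x y, d x y ≤ 1

def eball {S : Type*} (d : S → S → ℝ≥0∞) (X : Set S) (ε : ℝ≥0∞) : Set S :=
  {y | ∃ x ∈ X, d x y < ε}

def LP {S : Type*} (d : S → S → ℝ≥0∞) (μ ν : S → ℝ≥0∞) : ℝ≥0∞ :=
  sInf {ε | ∀ X : Set S,
    mass μ X ≤ mass ν (eball d X ε) + ε ∧ mass ν X ≤ mass μ (eball d X ε) + ε}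

def push {X Y : Type*} (f : X → Y) (φ : X → ℝ≥0∞) : Y → ℝ≥0∞ :=
  fun y => mass φ (f ⁻¹' {y})

lemma mass_mono {S : Type*} (φ : S → ℝ≥0∞) {A B : Set S} (h : A ⊆ B) :
    mass φ A ≤ mass φ B :=
  ENNReal.tsum_mono_subtype φ h

lemma mass_push {X Y : Type*} (f : X → Y) (φ : X → ℝ≥0∞) (B : Set Y) :
    mass (push f φ) B = mass φ (f ⁻¹' B) := by
  have fiber : ∀ y, ∑' x : f ⁻¹' {y}, (f ⁻¹' B).indicator φ x = B.indicator (push f φ) y := by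
    intro y
    have mem_iff : ∀ x : f ⁻¹' {y}, (x : X) ∈ f ⁻¹' B ↔ y ∈ B := fun x => by
      rw [Set.mem_preimage, Set.mem_singleton_iff.mp x.2]
    by_cases hy : y ∈ B
    · rw [Set.indicator_of_mem hy, push, mass]
      exact tsum_congr fun x => Set.indicator_of_mem ((mem_iff x).mpr hy) φ
    · rw [Set.indicator_of_notMem hy]
      exact ENNReal.tsum_eq_zero.mpr fun x => Set.indicator_of_notMem (mt (mem_iff x).mp hy) φ
  rw [mass, mass, tsum_subtype, tsum_subtype, ← ENNReal.tsum_fiberwise _ f]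
  exact (tsum_congr fiber).symm

lemma preimage_subset_preimage_eball {X Y : Type*} (d : Y → Y → ℝ≥0∞) {f g : X → Y}
    {ε : ℝ≥0∞} (h : ∀ x, d (f x) (g x) < ε) (B : Set Y) :
    f ⁻¹' B ⊆ g ⁻¹' eball d B ε :=
  fun x hx => ⟨f x, hx, h x⟩

/- The inclusion of preimages already gives the mass inequalities; the additive slack `+ ε`
in `LP` is never needed. -/
lemma LP_push_le {X Y : Type*} (d : Y → Y → ℝ≥0∞) (hsymm : ∀ y y', d y y' = d y' y)
    {f₁ f₂ : X → Y} {ε : ℝ≥0∞} (h : ∀ x, d (f₁ x) (f₂ x) < ε) (φ : X → ℝ≥0∞) :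
    LP d (push f₁ φ) (push f₂ φ) ≤ ε := by
  have h' : ∀ x, d (f₂ x) (f₁ x) < ε := fun x => hsymm (f₂ x) (f₁ x) ▸ h x
  refine sInf_le fun B => ⟨?_, ?_⟩ <;> rw [mass_push, mass_push]
  · exact (mass_mono φ (preimage_subset_preimage_eball d h B)).trans le_self_add
  · exact (mass_mono φ (preimage_subset_preimage_eball d h' B)).trans le_self_add

theorem stmt14_general {X Y : Type*} (dY : Y → Y → ℝ≥0∞)
    (hY : IsPseudometric dY)
    (f₁ f₂ : X → Y) :
    (⨆ φ : {φ : X → ℝ≥0∞ // IsSubdist φ}, LP dY (push f₁ φ.1) (push f₂ φ.1)) ≤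
      ⨆ x : X, dY (f₁ x) (f₂ x) := by
  refine iSup_le fun φ => le_of_forall_gt_imp_ge_of_dense fun ε hε => ?_
  exact LP_push_le dY hY.2.1 (fun x => (le_iSup (fun x => dY (f₁ x) (f₂ x)) x).trans_lt hε) φ.1

theorem stmt14 {X Y : Type*} (dX : X → X → ℝ≥0∞) (dY : Y → Y → ℝ≥0∞)
    (hX : IsPseudometric dX) (hY : IsPseudometric dY)
    (f₁ f₂ : X → Y)
    (hf₁ : ∀ x x', dY (f₁ x) (f₁ x') ≤ dX x x')
    (hf₂ : ∀ x x', dY (f₂ x) (f₂ x') ≤ dX x x') :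
    (⨆ φ : {φ : X → ℝ≥0∞ // IsSubdist φ}, LP dY (push f₁ φ.1) (push f₂ φ.1)) ≤
      ⨆ x : X, dY (f₁ x) (f₂ x) :=
  stmt14_general dY hY f₁ f₂
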